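/- For any λ > 1 there exists a countable, locally finite family 𝒞 of closed discs in the plane with pairwise disjoint interiors such that the family of λ-enlargements {λ(C − c_C) + c_C : C ∈ 𝒞} covers all of ℝ². (Discs of unbounded radii are allowed.) -/

import Mathlib

open Metric Filter

/-!
Place discs of radii `ρ ^ i` along a ray, the `i`-th centred at distance `(1 + k) ρ ^ i - k`
from the origin. When `k (ρ - 1) ≥ 2` the gap between the centres of discs `i < j` exceeds the
sum of their radii, so the discs are disjoint. The near edge of the `i`-th disc is at distance
`k ρ ^ i - k → ∞` from the origin, which gives local finiteness, and for `k < λ - 1` its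
`λ`-enlargement contains the ball of radius `(λ - 1 - k) ρ ^ i + k → ∞` about the origin,
so the enlargements cover the plane.
-/

section Balls

variable {E : Type*} [NormedAddCommGroup E]

theorem finite_setOf_closedBall_inter_nonempty {c : ℕ → E} {r : ℕ → ℝ}
    (h : Tendsto (fun i => ‖c i‖ - r i) atTop atTop) {K : Set E} (hK : Bornology.IsBounded K) :
    {i | (closedBall (c i) (r i) ∩ K).Nonempty}.Finite := by
  obtain ⟨R, hR⟩ := hK.subset_closedBall 0
  have hfar : ∀ᶠ i in cofinite, R < ‖c i‖ - r i := by
    rw [Nat.cofinite_eq_atTop]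
    exact h.eventually_gt_atTop R
  refine (eventually_cofinite.1 hfar).subset fun i ⟨y, hyc, hyK⟩ => not_lt.2 ?_
  have hy : ‖y‖ ≤ R := mem_closedBall_zero_iff.1 (hR hyK)
  rw [mem_closedBall, dist_eq_norm] at hyc
  linarith [norm_le_insert' (c i) y, norm_sub_rev (c i) y]

theorem exists_mem_closedBall_of_tendsto {c : ℕ → E} {r : ℕ → ℝ}
    (h : Tendsto (fun i => r i - ‖c i‖) atTop atTop) (x : E) :
    ∃ i, x ∈ closedBall (c i) (r i) := by
  obtain ⟨i, hi⟩ := (h.eventually_ge_atTop ‖x‖).exists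
  exact ⟨i, by rw [mem_closedBall, dist_eq_norm]; linarith [norm_sub_le x (c i)]⟩

theorem pairwise_disjoint_ball_smul [NormedSpace ℝ E] {e : E} (he : ‖e‖ = 1) {a r : ℕ → ℝ}
    (h : ∀ i j, i < j → r i + r j ≤ a j - a i) :
    Pairwise fun i j => Disjoint (ball (a i • e) (r i)) (ball (a j • e) (r j)) := by
  intro i j hij
  apply ball_disjoint_ball
  rw [dist_eq_norm, ← sub_smul, norm_smul, he, mul_one, Real.norm_eq_abs]
  rcases hij.lt_or_gt with hij | hji
  · linarith [h i j hij, neg_abs_le (a i - a j)]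
  · linarith [h j i hji, le_abs_self (a i - a j)]

end Balls

section RayDiscs

variable {E : Type*} [NormedAddCommGroup E] [NormedSpace ℝ E]

noncomputable def rayDisc (k ρ : ℝ) (e : E) (i : ℕ) : E × ℝ :=
  (((1 + k) * ρ ^ i - k) • e, ρ ^ i)

variable {k ρ : ℝ} {e : E}

theorem norm_rayDisc_fst (hk : 0 ≤ k) (hρ : 1 ≤ ρ) (he : ‖e‖ = 1) (i : ℕ) :
    ‖(rayDisc k ρ e i).1‖ = (1 + k) * ρ ^ i - k := by
  have hpow : 1 ≤ ρ ^ i := one_le_pow₀ hρ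
  rw [rayDisc, norm_smul, he, mul_one, Real.norm_of_nonneg (by nlinarith)]

theorem pow_add_pow_le_of_lt (hk : 0 ≤ k) (hρ : 1 ≤ ρ) (hkρ : 2 ≤ k * (ρ - 1)) {i j : ℕ}
    (hij : i < j) : ρ ^ i + ρ ^ j ≤ ((1 + k) * ρ ^ j - k) - ((1 + k) * ρ ^ i - k) := by
  have hstep : ρ ^ i * ρ ≤ ρ ^ j := pow_succ ρ i ▸ pow_le_pow_right₀ hρ hij
  nlinarith [mul_le_mul_of_nonneg_left hstep hk,
    mul_le_mul_of_nonneg_left hkρ (pow_nonneg (zero_le_one.trans hρ) i)]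

theorem pairwise_disjoint_ball_rayDisc (hk : 0 ≤ k) (hρ : 1 ≤ ρ) (hkρ : 2 ≤ k * (ρ - 1))
    (he : ‖e‖ = 1) :
    Pairwise fun i j =>
      Disjoint (ball (rayDisc k ρ e i).1 (rayDisc k ρ e i).2)
        (ball (rayDisc k ρ e j).1 (rayDisc k ρ e j).2) :=
  pairwise_disjoint_ball_smul he fun _ _ => pow_add_pow_le_of_lt hk hρ hkρ

theorem tendsto_norm_rayDisc_sub_radius (hk : 0 < k) (hρ : 1 < ρ) (he : ‖e‖ = 1) :
    Tendsto (fun i => ‖(rayDisc k ρ e i).1‖ - (rayDisc k ρ e i).2) atTop atTop := by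
  simp_rw [norm_rayDisc_fst hk.le hρ.le he, rayDisc]
  have h := tendsto_atTop_add_const_right _ (-k)
    ((tendsto_pow_atTop_atTop_of_one_lt hρ).const_mul_atTop hk)
  refine h.congr fun i => ?_
  ring

theorem tendsto_enlarged_radius_sub_norm_rayDisc {lam : ℝ} (hk : 0 < k) (hklam : k < lam - 1)
    (hρ : 1 < ρ) (he : ‖e‖ = 1) :
    Tendsto (fun i => lam * (rayDisc k ρ e i).2 - ‖(rayDisc k ρ e i).1‖) atTop atTop := by
  simp_rw [norm_rayDisc_fst hk.le hρ.le he, rayDisc]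
  have h := tendsto_atTop_add_const_right _ k
    ((tendsto_pow_atTop_atTop_of_one_lt hρ).const_mul_atTop (sub_pos.2 hklam))
  refine h.congr fun i => ?_
  ring

end RayDiscs

/-- For any `λ > 1` there is a countable, locally finite packing of the plane by closed
discs (given as center–radius pairs with positive radii, with pairwise disjoint open
discs) whose `λ`-enlargements cover the whole plane. -/
theorem stmt_10 (lam : ℝ) (hlam : 1 < lam) :
    ∃ 𝒞 : Set (EuclideanSpace ℝ (Fin 2) × ℝ),
      𝒞.Countable ∧
      (∀ C ∈ 𝒞, 0 < C.2) ∧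
      (∀ C ∈ 𝒞, ∀ D ∈ 𝒞, C ≠ D → Disjoint (ball C.1 C.2) (ball D.1 D.2)) ∧
      (∀ K : Set (EuclideanSpace ℝ (Fin 2)), Bornology.IsBounded K →
        {C ∈ 𝒞 | (closedBall C.1 C.2 ∩ K).Nonempty}.Finite) ∧
      (∀ x : EuclideanSpace ℝ (Fin 2), ∃ C ∈ 𝒞, x ∈ closedBall C.1 (lam * C.2)) := by
  obtain ⟨e, he⟩ := exists_norm_eq (EuclideanSpace ℝ (Fin 2)) zero_le_one
  have hlam1 : 0 < lam - 1 := sub_pos.2 hlam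
  set k := (lam - 1) / 2
  set ρ := 1 + 4 / (lam - 1)
  have hk : 0 < k := by positivity
  have hρ : 1 < ρ := lt_add_of_pos_right 1 (by positivity)
  have hklam : k < lam - 1 := half_lt_self hlam1
  have hkρ : k * (ρ - 1) = 2 := by
    simp only [k, ρ, add_sub_cancel_left]
    field_simp
    norm_num
  refine ⟨Set.range (rayDisc k ρ e), Set.countable_range _, ?_, ?_, ?_, ?_⟩
  · rintro _ ⟨i, rfl⟩
    exact pow_pos (zero_lt_one.trans hρ) i
  · rintro _ ⟨i, rfl⟩ _ ⟨j, rfl⟩ hne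
    exact pairwise_disjoint_ball_rayDisc hk.le hρ.le hkρ.ge he fun hij => hne (hij ▸ rfl)
  · intro K hK
    refine ((finite_setOf_closedBall_inter_nonempty
      (tendsto_norm_rayDisc_sub_radius hk hρ he) hK).image (rayDisc k ρ e)).subset ?_
    rintro _ ⟨⟨i, rfl⟩, hi⟩
    exact ⟨i, hi, rfl⟩
  · intro x
    obtain ⟨i, hi⟩ := exists_mem_closedBall_of_tendsto
      (tendsto_enlarged_radius_sub_norm_rayDisc hk hklam hρ he) x
    exact ⟨_, ⟨i, rfl⟩, hi⟩
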